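/- Suppose k, r, n are positive integers with n ≥ 2 and r ≤ n − 1. Then the list chromatic number of C_{2k+1} □ P_n^r is at most r + 2, where P_n^r is the r-th power of the path on n vertices. -/

import Mathlib

open SimpleGraph Finset

attribute [local instance] Classical.propDecidable

namespace ATPaper

/-- An orientation of a simple graph: each edge receives exactly one direction,
and arcs only exist along edges. -/
structure GraphOrientation {V : Type*} (G : SimpleGraph V) where
  arc : V → V → Prop
  arc_adj : ∀ u v, arc u v → G.Adj u v
  adj_arc : ∀ u v, G.Adj u v → (arc u v ↔ ¬ arc v u)

variable {V : Type*} [Fintype V]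

/-- The set of arcs of an orientation. -/
noncomputable def GraphOrientation.arcs {G : SimpleGraph V} (D : GraphOrientation G) :
    Finset (V × V) :=
  Finset.univ.filter fun p => D.arc p.1 p.2

/-- In-degree of a vertex in a finite set of arcs. -/
noncomputable def indeg (F : Finset (V × V)) (v : V) : ℕ :=
  (F.filter fun p => p.2 = v).card

/-- Out-degree of a vertex in a finite set of arcs. -/
noncomputable def outdeg (F : Finset (V × V)) (v : V) : ℕ :=
  (F.filter fun p => p.1 = v).card

/-- The circulations contained in an orientation `D`: spanning subdigraphs (sets of
arcs of `D`) in which every vertex has in-degree equal to out-degree. -/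
noncomputable def circulations {G : SimpleGraph V} (D : GraphOrientation G) :
    Finset (Finset (V × V)) :=
  D.arcs.powerset.filter fun F => ∀ v, indeg F v = outdeg F v

/-- `G` has an Alon–Tarsi orientation witnessing the bound `k`: an orientation with
maximum in-degree at most `k - 1` in which the numbers of even and odd circulations
differ. -/
noncomputable def HasATOrientation (G : SimpleGraph V) (k : ℕ) : Prop :=
  ∃ D : GraphOrientation G,
    (∀ v, indeg D.arcs v + 1 ≤ k) ∧
    ((circulations D).filter fun F => Even F.card).card ≠
      ((circulations D).filter fun F => Odd F.card).card

/-- The Alon–Tarsi number of `G`. -/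
noncomputable def alonTarsiNumber (G : SimpleGraph V) : ℕ :=
  sInf {k | HasATOrientation G k}

/-- `G` admits a proper coloring from the list assignment `L`. -/
def Choosable {W : Type*} (G : SimpleGraph W) (L : W → Finset ℕ) : Prop :=
  ∃ f : W → ℕ, (∀ v, f v ∈ L v) ∧ ∀ u v, G.Adj u v → f u ≠ f v

/-- `G` is `k`-choosable: colorable from every list assignment with lists of size at
least `k`. -/
def IsKChoosable {W : Type*} (G : SimpleGraph W) (k : ℕ) : Prop :=
  ∀ L : W → Finset ℕ, (∀ v, k ≤ (L v).card) → Choosable G L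

/-- The list chromatic number of `G`. -/
noncomputable def listChromaticNumber {W : Type*} (G : SimpleGraph W) : ℕ :=
  sInf {k | IsKChoosable G k}

/-- The `r`-th power of a graph: distinct vertices are adjacent iff their distance
is at most `r`. -/
def graphPower {W : Type*} (G : SimpleGraph W) (r : ℕ) : SimpleGraph W where
  Adj u v := u ≠ v ∧ G.Reachable u v ∧ G.dist u v ≤ r
  symm := ⟨by
    rintro u v ⟨h1, h2, h3⟩
    exact ⟨h1.symm, h2.symm, by rwa [SimpleGraph.dist_comm]⟩⟩
  loopless := ⟨by rintro v ⟨h1, -, -⟩; exact h1 rfl⟩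

/-- The join of two vertex-disjoint graphs. -/
def joinGraph {A B : Type*} (G : SimpleGraph A) (H : SimpleGraph B) :
    SimpleGraph (A ⊕ B) where
  Adj x y :=
    match x, y with
    | Sum.inl a, Sum.inl b => G.Adj a b
    | Sum.inr a, Sum.inr b => H.Adj a b
    | Sum.inl _, Sum.inr _ => True
    | Sum.inr _, Sum.inl _ => True
  symm := ⟨by
    rintro (a | a) (b | b) h
    · exact G.adj_symm h
    · trivial
    · trivial
    · exact H.adj_symm h⟩
  loopless := ⟨by
    rintro (a | a) h
    · exact G.irrefl h
    · exact H.irrefl h⟩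


/-!
Colour `C_m □ P_n^r` (`m` odd) column by column, each column being a copy of `C_m`. When column
`j` is reached, the at most `r` earlier columns adjacent to it leave each of its vertices a
residual list of size at least `2`. A cycle with such lists is colourable unless all lists are one
and the same `2`-set, and a colourable odd cycle has at least two colourings. Two different
colourings of column `j` cannot both leave column `j + 1` with one constant `2`-set: its residual
lists arise by deleting the colour of column `j` from lists of size at least `3`, so the two
colourings would agree or one of them would be constant. Hence one of them keeps the induction
going.
-/

lemma eq_or_exists_const_of_erase_eq {ι α : Type*} [DecidableEq α] {S : ι → Finset α}
    {c c' : ι → α} {A A' : Finset α} (hA : ∀ i, (S i).erase (c i) = A)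
    (hA' : ∀ i, (S i).erase (c' i) = A') (hS : ∀ i, #A < #(S i)) (hAA' : #A' = #A) :
    c = c' ∨ ∃ d, ∀ i, c i = d := by
  have hinsert : ∀ {b : ι → α} {B : Finset α}, (∀ i, (S i).erase (b i) = B) → #B = #A →
      ∀ i, S i = insert (b i) B ∧ b i ∉ B := fun {b B} hB hBA i => by
    have hb : b i ∈ S i := by
      by_contra h
      have := hS i
      rw [← hBA, ← hB i, erase_eq_of_notMem h] at this
      exact lt_irrefl _ this
    exact ⟨by rw [← hB i, insert_erase hb], hB i ▸ notMem_erase _ _⟩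
  have hc := hinsert hA rfl
  have hc' := hinsert hA' hAA'
  by_cases hsub : A' ⊆ A
  · obtain rfl := eq_of_subset_of_card_le hsub hAA'.ge
    refine .inl (funext fun i => ?_)
    have h := (hc i).1 ▸ mem_insert_self (c i) A'
    rw [(hc' i).1] at h
    exact (mem_insert.mp h).resolve_right (hc i).2
  · obtain ⟨d, hd, hdA⟩ := not_subset.mp hsub
    refine .inr ⟨d, fun i => ?_⟩
    have h : d ∈ insert (c' i) A' := mem_insert_of_mem hd
    rw [← (hc' i).1, (hc i).1] at h
    exact ((mem_insert.mp h).resolve_right hdA).symm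

section OddCycle

variable {m : ℕ}

lemma val_add_natCast_sub_self (v : ZMod m) {d : ℕ} (hd : d < m) : (v + d - v).val = d := by
  rw [add_sub_cancel_left, ZMod.val_cast_of_lt hd]

lemma natCast_ne_zero_of_lt {j : ℕ} (h₀ : 0 < j) (hj : j < m) : (j : ZMod m) ≠ 0 := by
  rw [Ne, ZMod.natCast_eq_zero_iff]
  exact fun h => (Nat.le_of_dvd h₀ h).not_gt hj

lemma exists_eq_add_natCast [NeZero m] (v x : ZMod m) : ∃ d < m, x = v + d :=
  ⟨(x - v).val, ZMod.val_lt _, by rw [ZMod.natCast_zmod_val]; ring⟩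

lemma apply_eq_apply_zero [NeZero m] {α : Type*} {F : ZMod m → α} (h : ∀ x, F (x + 1) = F x)
    (x : ZMod m) : F x = F 0 := by
  rw [← ZMod.natCast_zmod_val x]
  induction x.val with
  | zero => simp
  | succ d ih => rw [Nat.cast_succ, h, ih]

def IsCycleColoring (R : ZMod m → Finset ℕ) (c : ZMod m → ℕ) : Prop :=
  ∀ x, c x ∈ R x ∧ c x ≠ c (x + 1)

variable {R : ZMod m → Finset ℕ}

lemma exists_coloring_off_edge [NeZero m] (hR : ∀ x, 2 ≤ #(R x)) (v : ZMod m) {a : ℕ}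
    (ha : a ∈ R (v + 1)) :
    ∃ g : ZMod m → ℕ, g (v + 1) = a ∧ (∀ x, g x ∈ R x) ∧ ∀ x ≠ v, g x ≠ g (x + 1) := by
  choose next hnext_mem hnext_ne using fun x b => exists_mem_ne (hR x) b
  let G : ℕ → ℕ := fun d => Nat.rec a (fun d b => next (v + 1 + (d + 1 : ℕ)) b) d
  have hG : ∀ d : ℕ, G d ∈ R (v + 1 + d) := by
    intro d
    cases d with
    | zero => simpa [G] using ha
    | succ d => exact hnext_mem _ _
  have hval : ∀ {d}, d < m → (v + 1 + d - (v + 1)).val = d := val_add_natCast_sub_self _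
  refine ⟨fun x => G (x - (v + 1)).val, by simp [G], fun x => ?_, fun x hx => ?_⟩
  · obtain ⟨d, hd, rfl⟩ := exists_eq_add_natCast (v + 1) x
    simpa only [hval hd] using hG d
  · obtain ⟨d, hd, rfl⟩ := exists_eq_add_natCast (v + 1) x
    have hd1 : d + 1 < m := by
      by_contra h
      have hdm : d + 1 = m := by omega
      apply hx
      rw [add_assoc, add_comm 1, ← Nat.cast_add_one, hdm, ZMod.natCast_self, add_zero]
    have hsucc : v + 1 + (d : ZMod m) + 1 = v + 1 + ((d + 1 : ℕ) : ZMod m) := by push_cast; ring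
    simp only [hsucc, hval hd, hval hd1]
    exact (hnext_ne _ _).symm

variable [Fact (1 < m)]

lemma isCycleColoring_update {g : ZMod m → ℕ} (hg : ∀ x, g x ∈ R x) {v : ZMod m}
    (hgv : ∀ x ≠ v, g x ≠ g (x + 1)) {b : ℕ} (hb : b ∈ R v) (hb₁ : b ≠ g (v - 1))
    (hb₂ : b ≠ g (v + 1)) : IsCycleColoring R (Function.update g v b) := by
  intro x
  by_cases hx : x = v
  · subst hx
    rw [Function.update_self, Function.update_of_ne (by simp)]
    exact ⟨hb, hb₂⟩
  rw [Function.update_of_ne hx]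
  refine ⟨hg x, ?_⟩
  by_cases hx₁ : x + 1 = v
  · rw [hx₁, Function.update_self, ← add_sub_cancel_right x 1, hx₁]
    exact hb₁.symm
  · rw [Function.update_of_ne hx₁]
    exact hgv x hx

lemma exists_isCycleColoring_of_three_le_card (hR : ∀ x, 2 ≤ #(R x)) {v : ZMod m}
    (hv : 3 ≤ #(R v)) : ∃ c, IsCycleColoring R c := by
  obtain ⟨a, ha⟩ := card_pos.mp (by have := hR (v + 1); omega : 0 < #(R (v + 1)))
  obtain ⟨g, hgv, hg, hg'⟩ := exists_coloring_off_edge hR v ha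
  obtain ⟨b, hb, hb'⟩ := exists_mem_notMem_of_card_lt_card
    ((card_le_two (a := g (v - 1)) (b := a)).trans_lt hv)
  simp only [mem_insert, mem_singleton, not_or] at hb'
  exact ⟨_, isCycleColoring_update hg hg' hb hb'.1 (hgv ▸ hb'.2)⟩

lemma exists_isCycleColoring_of_not_subset (hR : ∀ x, 2 ≤ #(R x)) {v : ZMod m}
    (hv : ¬ R v ⊆ R (v - 1)) : ∃ c, IsCycleColoring R c := by
  obtain ⟨e, he, he'⟩ := not_subset.mp hv
  obtain ⟨a, ha, hae⟩ := exists_mem_ne (hR (v + 1)) e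
  obtain ⟨g, hgv, hg, hg'⟩ := exists_coloring_off_edge hR v ha
  exact ⟨_, isCycleColoring_update hg hg' he (fun h => he' (h ▸ hg _)) (hgv ▸ hae.symm)⟩

lemma eq_const_of_not_colorable (hR : ∀ x, 2 ≤ #(R x))
    (h : ¬ ∃ c, IsCycleColoring R c) : ∃ A : Finset ℕ, #A = 2 ∧ ∀ x, R x = A := by
  have hcard : ∀ x, #(R x) = 2 := fun x => by
    by_contra hx
    exact h (exists_isCycleColoring_of_three_le_card hR (by have := hR x; omega : 3 ≤ #(R x)))
  have hsucc : ∀ x, R (x + 1) = R x := fun x => by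
    by_contra hx
    refine h (exists_isCycleColoring_of_not_subset hR (v := x + 1) fun hsub => hx ?_)
    rw [add_sub_cancel_right] at hsub
    exact eq_of_subset_of_card_le hsub (by rw [hcard, hcard])
  exact ⟨R 0, hcard 0, apply_eq_apply_zero hsucc⟩

lemma isCycleColoring_piecewise {f o : ZMod m → ℕ} (hf : IsCycleColoring R f)
    (ho : ∀ x, o x ∈ R x) {a : ZMod m} {D : ℕ} (hD : D + 1 < m)
    (hin : ∀ i < D, o (a + i) ≠ o (a + i + 1)) (hstart : f (a - 1) ≠ o a)
    (hend : o (a + D) ≠ f (a + D + 1)) :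
    IsCycleColoring R (fun x => if (x - a).val ≤ D then o x else f x) := by
  intro x
  obtain ⟨d, hd, rfl⟩ := exists_eq_add_natCast a x
  refine ⟨by dsimp only; split_ifs; exacts [ho _, (hf _).1], ?_⟩
  by_cases hd₁ : d + 1 < m
  · have hsucc : a + d + 1 = a + ((d + 1 : ℕ) : ZMod m) := by push_cast; ring
    simp only [hsucc, val_add_natCast_sub_self a hd, val_add_natCast_sub_self a hd₁]
    rw [← hsucc]
    rcases lt_trichotomy d D with h | rfl | h
    · simpa [h.le, Nat.succ_le_of_lt h] using hin d h
    · simpa using hend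
    · simpa [h.not_ge, (h.trans (Nat.lt_succ_self d)).not_ge] using (hf _).2
  · have hdm : d + 1 = m := by omega
    have hwrap : a + d + 1 = a := by
      rw [add_assoc, ← Nat.cast_add_one, hdm, ZMod.natCast_self, add_zero]
    have hprev : a + d = a - 1 := eq_sub_of_add_eq hwrap
    simp only [hwrap, val_add_natCast_sub_self a hd, sub_self, ZMod.val_zero, zero_le, if_true]
    rw [hprev, if_neg (by omega)]
    exact hstart

lemma apply_sub_one_eq_of_odd (hodd : Odd m) {f : ZMod m → ℕ} {a : ZMod m}
    (h : ∀ x ≠ a, x ≠ a - 1 → f (x - 1) = f (x + 1)) : f (a - 1) = f a := by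
  obtain ⟨k, rfl⟩ := hodd
  have hstep : ∀ i ≤ k, f (a + (2 * i : ℕ)) = f a := by
    intro i hi
    induction i with
    | zero => simp
    | succ i ih =>
      have hx := h (a + (2 * i + 1 : ℕ))
        (fun h' => natCast_ne_zero_of_lt (m := 2 * k + 1) (j := 2 * i + 1) (by omega) (by omega)
          (by simpa using h'))
        (fun h' => natCast_ne_zero_of_lt (m := 2 * k + 1) (j := 2 * i + 2) (by omega) (by omega)
          (by push_cast at h' ⊢; linear_combination h'))
      rw [← ih (by omega)]
      convert hx.symm using 2 <;> push_cast <;> ring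
  rw [← hstep k le_rfl]
  congr 1
  have := ZMod.natCast_self (2 * k + 1)
  push_cast at this ⊢
  linear_combination -this

/- Take the switch `(D, a)` with `D` least. Minimality makes `o = f (· + 1)` on `[a, a + D)`, so
`o` can replace `f` on the arc `[a, a + D]` unless this arc misses only `a - 1`. In that case
minimality also gives `o = f (· - 1)` away from `a`, so `f (x - 1) = f (x + 1)` for all
`x ∉ {a - 1, a}`, which is impossible on an odd cycle. -/
lemma exists_ne_isCycleColoring_of_switch (hodd : Odd m) {f o : ZMod m → ℕ}
    (hf : IsCycleColoring R f) (ho : ∀ x, o x ∈ R x) (hof : ∀ x, o x ≠ f x)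
    (hsw : ∃ D : ℕ, ∃ a, o a ≠ f (a - 1) ∧ o (a + D) ≠ f (a + D + 1)) :
    ∃ g, IsCycleColoring R g ∧ g ≠ f := by
  obtain ⟨a, ha₁, ha₂⟩ := Nat.find_spec hsw
  set D := Nat.find hsw
  have hmin : ∀ i < D, ∀ b, o b ≠ f (b - 1) → o (b + i) = f (b + i + 1) := by
    intro i hi b hb
    by_contra h
    exact Nat.find_min hsw hi ⟨b, hb, h⟩
  have hm : 1 < m := Fact.out
  have hDm : D < m := by
    by_contra h
    refine Nat.find_min hsw (show D - m < D by omega) ⟨a, ha₁, ?_⟩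
    rwa [Nat.cast_sub (by omega), ZMod.natCast_self, sub_zero]
  by_cases hD : D + 1 < m
  · refine ⟨_, isCycleColoring_piecewise hf ho hD (fun i hi => ?_) ha₁.symm ha₂,
      fun h => ?_⟩
    · rw [hmin i hi a ha₁]
      exact (hof _).symm
    · exact hof a (by simpa using congrFun h a)
  have hlast : a + (D : ℕ) = a - 1 := by
    rw [show D = (m - 1 : ℕ) by omega, Nat.cast_sub NeZero.one_le, ZMod.natCast_self]
    ring
  rw [hlast, sub_add_cancel] at ha₂
  refine absurd ?_ (hf (a - 1)).2
  rw [sub_add_cancel]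
  refine apply_sub_one_eq_of_odd hodd fun x hxa hxa₁ => ?_
  obtain ⟨i, hi, rfl⟩ := exists_eq_add_natCast a x
  have hi₀ : i ≠ 0 := by rintro rfl; simp at hxa
  have hiD : i < D := by
    by_contra h
    rw [show i = D by omega, hlast] at hxa₁
    exact hxa₁ rfl
  have hback : o (a + i) = f (a + i - 1) := by
    by_contra h
    refine ha₂ ?_
    have := hmin (m - 1 - i) (by omega) (a + i) h
    rwa [show a + i + ((m - 1 - i : ℕ) : ZMod m) = a - 1 by
      rw [← hlast, add_assoc, ← Nat.cast_add, show i + (m - 1 - i) = D by omega],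
        sub_add_cancel]
      at this
  rw [← hback, hmin i hiD a ha₁]

lemma exists_ne_isCycleColoring (hodd : Odd m) (hR : ∀ x, 2 ≤ #(R x)) {f : ZMod m → ℕ}
    (hf : IsCycleColoring R f) : ∃ g, IsCycleColoring R g ∧ g ≠ f := by
  choose o ho hof using fun x => exists_mem_ne (hR x) (f x)
  by_cases hall : ∀ x, o x = f (x + 1) ∨ o (x + 1) = f x
  · refine ⟨o, fun x => ⟨ho x, ?_⟩, fun h => hof 0 (congrFun h 0)⟩
    rcases hall x with h | h
    · rw [h]
      exact (hof (x + 1)).symm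
    · rw [h]
      exact hof x
  push Not at hall
  obtain ⟨b, hb₁, hb₂⟩ := hall
  refine exists_ne_isCycleColoring_of_switch hodd hf ho hof ⟨m - 1, b + 1, ?_, ?_⟩
  · rwa [add_sub_cancel_right]
  · rwa [Nat.cast_sub NeZero.one_le, ZMod.natCast_self, Nat.cast_one, zero_sub,
      add_neg_cancel_right]

end OddCycle

section Columns

variable {m : ℕ} (L : ZMod m → ℕ → Finset ℕ) (r : ℕ)

-- `f x j` is the colour of the vertex `(x, j)`; its neighbours in earlier columns are the `(x, t)`
-- with `j - r ≤ t < j`.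
def residual (f : ZMod m → ℕ → ℕ) (j : ℕ) (x : ZMod m) : Finset ℕ :=
  L x j \ (Ico (j - r) j).image (f x)

def IsColoringUpTo (f : ZMod m → ℕ → ℕ) (n : ℕ) : Prop :=
  ∀ x j, j < n →
    f x j ∈ L x j ∧ f x j ≠ f (x + 1) j ∧ ∀ t < j, j ≤ t + r → f x t ≠ f x j

variable {L r}

lemma two_le_card_residual (hL : ∀ x j, r + 2 ≤ #(L x j)) (f : ZMod m → ℕ → ℕ) (j : ℕ)
    (x : ZMod m) : 2 ≤ #(residual L r f j x) := by
  have := le_card_sdiff ((Ico (j - r) j).image (f x)) (L x j)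
  have := (card_image_le (s := Ico (j - r) j) (f := f x)).trans_eq (Nat.card_Ico _ _)
  have := hL x j
  unfold residual
  omega

lemma IsColoringUpTo.update {f : ZMod m → ℕ → ℕ} {j : ℕ} {c : ZMod m → ℕ}
    (hf : IsColoringUpTo L r f j) (hc : IsCycleColoring (residual L r f j) c) :
    IsColoringUpTo L r (fun x => Function.update (f x) j (c x)) (j + 1) := by
  intro x t ht
  rcases (Nat.lt_succ_iff.mp ht).lt_or_eq with ht | rfl
  · obtain ⟨hmem, hne, hrow⟩ := hf x t ht
    simp only [Function.update_of_ne ht.ne]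
    exact ⟨hmem, hne, fun s hs => Function.update_of_ne (hs.trans ht).ne _ _ ▸ hrow s hs⟩
  · obtain ⟨hmem, hne⟩ := hc x
    rw [residual, mem_sdiff, mem_image] at hmem
    simp only [Function.update_self]
    refine ⟨hmem.1, hne, fun s hs hsr => ?_⟩
    rw [Function.update_of_ne hs.ne]
    exact fun h => hmem.2 ⟨s, mem_Ico.mpr ⟨by omega, hs⟩, h⟩

lemma residual_update_succ (hr : 1 ≤ r) (f : ZMod m → ℕ → ℕ) (j : ℕ) (c : ZMod m → ℕ)
    (x : ZMod m) :
    residual L r (fun x => Function.update (f x) j (c x)) (j + 1) x =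
      (L x (j + 1) \ (Ico (j + 1 - r) j).image (f x)).erase (c x) := by
  rw [residual, ← sdiff_insert, Nat.Ico_succ_right_eq_insert_Ico (by omega), image_insert,
    Function.update_self]
  congr 2
  refine image_congr fun s hs => ?_
  exact Function.update_of_ne (mem_Ico.mp hs).2.ne _ _

variable [Fact (1 < m)]

lemma exists_isCycleColoring_residual_succ (hr : 1 ≤ r) (hL : ∀ x j, r + 2 ≤ #(L x j))
    {f : ZMod m → ℕ → ℕ} {j : ℕ} {c c' : ZMod m → ℕ}
    (hc : IsCycleColoring (residual L r f j) c) (hc' : IsCycleColoring (residual L r f j) c')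
    (hne : c ≠ c') :
    ∃ c₀, IsCycleColoring (residual L r f j) c₀ ∧
      ∃ e, IsCycleColoring
        (residual L r (fun x => Function.update (f x) j (c₀ x)) (j + 1)) e := by
  by_contra! h
  have hconst {b : ZMod m → ℕ} (hb : IsCycleColoring (residual L r f j) b) :=
    eq_const_of_not_colorable (two_le_card_residual hL _ (j + 1)) fun ⟨e, he⟩ => h b hb e he
  obtain ⟨A, hA₂, hA⟩ := hconst hc
  obtain ⟨A', hA'₂, hA'⟩ := hconst hc'
  simp only [residual_update_succ hr] at hA hA'
  have hS (x : ZMod m) : #A < #(L x (j + 1) \ (Ico (j + 1 - r) j).image (f x)) := by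
    have := le_card_sdiff ((Ico (j + 1 - r) j).image (f x)) (L x (j + 1))
    have := (card_image_le (s := Ico (j + 1 - r) j) (f := f x)).trans_eq (Nat.card_Ico _ _)
    have := hL x (j + 1)
    omega
  rcases eq_or_exists_const_of_erase_eq hA hA' hS (hA'₂.trans hA₂.symm) with h | ⟨d, hd⟩
  · exact hne h
  · exact (hc 0).2 (by rw [hd, hd])

theorem exists_isColoringUpTo (hodd : Odd m) (hr : 1 ≤ r) (hL : ∀ x j, r + 2 ≤ #(L x j))
    (n : ℕ) : ∃ f, IsColoringUpTo L r f n ∧ ∃ c, IsCycleColoring (residual L r f n) c := by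
  induction n with
  | zero =>
    refine ⟨fun _ _ => 0, fun _ _ h => absurd h (Nat.not_lt_zero _),
      exists_isCycleColoring_of_three_le_card (v := 0) (two_le_card_residual hL _ 0) ?_⟩
    have := hL 0 0
    simp only [residual, zero_tsub, Ico_self, image_empty, sdiff_empty]
    omega
  | succ n ih =>
    obtain ⟨f, hf, c, hc⟩ := ih
    obtain ⟨c', hc', hne⟩ := exists_ne_isCycleColoring hodd (two_le_card_residual hL f n) hc
    obtain ⟨c₀, hc₀, hnext⟩ := exists_isCycleColoring_residual_succ hr hL hc hc' hne.symm
    exact ⟨_, hf.update hc₀, hnext⟩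

end Columns

lemma pathGraph_val_le_add_length {n : ℕ} {a b : Fin n} (p : (pathGraph n).Walk a b) :
    a.val ≤ b.val + p.length ∧ b.val ≤ a.val + p.length := by
  induction p with
  | nil => simp
  | cons h _ ih =>
    rw [pathGraph_adj] at h
    rw [Walk.length_cons]
    omega

lemma graphPower_pathGraph_adj {n r : ℕ} {a b : Fin n}
    (h : (graphPower (pathGraph n) r).Adj a b) :
    a.val ≠ b.val ∧ a.val ≤ b.val + r ∧ b.val ≤ a.val + r := by
  obtain ⟨hne, hreach, hdist⟩ := h
  obtain ⟨p, hp⟩ := hreach.exists_walk_length_eq_dist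
  have := pathGraph_val_le_add_length p
  exact ⟨Fin.val_ne_of_ne hne, by omega, by omega⟩

lemma cycleGraph_adj_finEquiv {m : ℕ} [NeZero m] {u v : Fin m} (h : (cycleGraph m).Adj u v) :
    ZMod.finEquiv m u = ZMod.finEquiv m v + 1 ∨ ZMod.finEquiv m v = ZMod.finEquiv m u + 1 := by
  have hval (w : Fin m) : (ZMod.finEquiv m w).val = w.val := by
    obtain ⟨m, rfl⟩ := Nat.exists_eq_succ_of_ne_zero (NeZero.ne m)
    rfl
  have hm : 1 < m := by
    rw [cycleGraph_adj'] at h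
    rcases h with h | h <;> exact h ▸ Fin.isLt _
  have : Fact (1 < m) := ⟨hm⟩
  have hone (w w' : Fin m) (h : (w - w').val = 1) : ZMod.finEquiv m w = ZMod.finEquiv m w' + 1 :=
    eq_add_of_sub_eq' (ZMod.val_injective m (by rw [← map_sub, hval, h, ZMod.val_one]))
  rw [cycleGraph_adj'] at h
  exact h.imp (hone u v) (hone v u)

theorem listChromaticNumber_oddCycle_boxProd_pathPower_general (k r n : ℕ)
    (hk : 1 ≤ k) (hr : 1 ≤ r) :
    listChromaticNumber (cycleGraph (2 * k + 1) □ graphPower (pathGraph n) r) ≤ r + 2 := by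
  have : Fact (1 < 2 * k + 1) := ⟨by omega⟩
  let e := ZMod.finEquiv (2 * k + 1)
  refine Nat.sInf_le fun L hL => ?_
  let L' : ZMod (2 * k + 1) → ℕ → Finset ℕ := fun x j =>
    if h : j < n then L (e.symm x, ⟨j, h⟩) else range (r + 2)
  have hL' (x : ZMod (2 * k + 1)) (j : ℕ) : r + 2 ≤ #(L' x j) := by
    unfold L'
    split_ifs
    exacts [hL _, (card_range _).ge]
  obtain ⟨f, hf, -⟩ := exists_isColoringUpTo (odd_two_mul_add_one k) hr hL' n
  refine ⟨fun w => f (e w.1) w.2, fun w => by simpa [L'] using (hf (e w.1) w.2 w.2.isLt).1,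
    fun w w' hadj => ?_⟩
  dsimp only
  rcases boxProd_adj.mp hadj with ⟨hc, h₂⟩ | ⟨hp, h₁⟩
  · rw [← h₂]
    rcases cycleGraph_adj_finEquiv hc with h | h
    · rw [h]
      exact ((hf _ _ w.2.isLt).2.1).symm
    · rw [h]
      exact (hf _ _ w.2.isLt).2.1
  · obtain ⟨hne, h₁', h₂'⟩ := graphPower_pathGraph_adj hp
    rw [← h₁]
    rcases lt_or_gt_of_ne hne with h | h
    · exact (hf _ _ w'.2.isLt).2.2 _ h (by omega)
    · exact ((hf _ _ w.2.isLt).2.2 _ h (by omega)).symm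

/-- For positive integers `k, r, n` with `n ≥ 2` and `r ≤ n - 1`:
`χ_ℓ(C_{2k+1} □ P_n^r) ≤ r + 2`. -/
theorem listChromaticNumber_oddCycle_boxProd_pathPower (k r n : ℕ)
    (hk : 1 ≤ k) (hr : 1 ≤ r) (hn : 2 ≤ n) (hrn : r ≤ n - 1) :
    listChromaticNumber (cycleGraph (2 * k + 1) □ graphPower (pathGraph n) r) ≤ r + 2 :=
  listChromaticNumber_oddCycle_boxProd_pathPower_general k r n hk hr

end ATPaper
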